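/- Let f, g, h : ℝ → ℝ be twice differentiable functions with g(Z)² − f(Z) h(Z) ≠ 0 for all Z, satisfying for all Z the four equations: (1) 2 f h f″ + f f′ h′ − 2 f (g′)² − 2 g² f″ + 2 g f′ g′ − h (f′)² = 0; (2) 2 h (g′)² − h f′ h′ − 2 g g′ h′ + f (h′)² + 2 g² h″ − 2 f h h″ = 0; (3) h f′ g′ − 2 g f′ h′ + f g′ h′ + 2 g² g″ − 2 f h g″ = 0; (4) − h² (f′)² + 2 f h² f″ + f² (h′)² + 4 f g g′ h′ − 2 g² (f′ h′ + f h″ + (g′)²) − 2 h (g² f″ + g(−2 f′ g′ + 2 f g″) + f((g′)² − f h″)) + 4 g³ g″ = 0. Then (g′(Z))² = f′(Z) h′(Z) for all Z. -/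

import Mathlib

/-- For the strain `C(Z) = [[f, g, 0], [g, h, 0], [0, 0, 1]]` with `g² − f h ≠ 0`, the
four Ricci compatibility equations imply `(g′)² = f′ h′`. -/
theorem ricci_compatibility_implies_g'_sq_eq_f'h'
    (f g h : ℝ → ℝ)
    (hf : Differentiable ℝ f) (hf' : Differentiable ℝ (deriv f))
    (hg : Differentiable ℝ g) (hg' : Differentiable ℝ (deriv g))
    (hh : Differentiable ℝ h) (hh' : Differentiable ℝ (deriv h))
    (hdet : ∀ Z, g Z ^ 2 - f Z * h Z ≠ 0)
    (e1 : ∀ Z, 2 * f Z * h Z * deriv (deriv f) Z + f Z * deriv f Z * deriv h Z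
      - 2 * f Z * (deriv g Z) ^ 2 - 2 * g Z ^ 2 * deriv (deriv f) Z
      + 2 * g Z * deriv f Z * deriv g Z - h Z * (deriv f Z) ^ 2 = 0)
    (e2 : ∀ Z, 2 * h Z * (deriv g Z) ^ 2 - h Z * deriv f Z * deriv h Z
      - 2 * g Z * deriv g Z * deriv h Z + f Z * (deriv h Z) ^ 2
      + 2 * g Z ^ 2 * deriv (deriv h) Z - 2 * f Z * h Z * deriv (deriv h) Z = 0)
    (e3 : ∀ Z, h Z * deriv f Z * deriv g Z - 2 * g Z * deriv f Z * deriv h Z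
      + f Z * deriv g Z * deriv h Z + 2 * g Z ^ 2 * deriv (deriv g) Z
      - 2 * f Z * h Z * deriv (deriv g) Z = 0)
    (e4 : ∀ Z, - h Z ^ 2 * (deriv f Z) ^ 2 + 2 * f Z * h Z ^ 2 * deriv (deriv f) Z
      + f Z ^ 2 * (deriv h Z) ^ 2 + 4 * f Z * g Z * deriv g Z * deriv h Z
      - 2 * g Z ^ 2 * (deriv f Z * deriv h Z + f Z * deriv (deriv h) Z + (deriv g Z) ^ 2)
      - 2 * h Z * (g Z ^ 2 * deriv (deriv f) Z
        + g Z * (-2 * deriv f Z * deriv g Z + 2 * f Z * deriv (deriv g) Z)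
        + f Z * ((deriv g Z) ^ 2 - f Z * deriv (deriv h) Z))
      + 4 * g Z ^ 3 * deriv (deriv g) Z = 0) :
    ∀ Z, (deriv g Z) ^ 2 = deriv f Z * deriv h Z := by
  -- abbreviations (as plain functions)
  have hDne : ∀ z, f z * h z - g z ^ 2 ≠ 0 := by
    intro z hz
    exact hdet z (by linarith)
  -- D and its derivative
  have hD' : ∀ z, HasDerivAt (fun z => f z * h z - g z ^ 2)
      (deriv f z * h z + f z * deriv h z - 2 * g z * deriv g z) z := by
    intro z
    have H := ((hf z).hasDerivAt.mul (hh z).hasDerivAt).sub ((hg z).hasDerivAt.pow 2)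
    convert H using 1
    all_goals first | (ext x; simp only [Pi.mul_apply, Pi.sub_apply, Pi.add_apply, Pi.pow_apply, id_eq] <;> ring) | ring | rfl
  -- DP := deriv of D, as explicit function; its derivative (second deriv of D)
  have hDP' : ∀ z, HasDerivAt (fun z => deriv f z * h z + f z * deriv h z - 2 * g z * deriv g z)
      (deriv (deriv f) z * h z + 2 * deriv f z * deriv h z + f z * deriv (deriv h) z
        - 2 * (deriv g z) ^ 2 - 2 * g z * deriv (deriv g) z) z := by
    intro z
    have H := (((hf' z).hasDerivAt.mul (hh z).hasDerivAt).add
        ((hf z).hasDerivAt.mul (hh' z).hasDerivAt)).sub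
        ((((hg z).hasDerivAt.mul (hg' z).hasDerivAt)).const_mul 2)
    convert H using 1
    all_goals first | (ext x; simp only [Pi.mul_apply, Pi.sub_apply, Pi.add_apply, Pi.pow_apply, id_eq] <;> ring) | ring | rfl
  -- P := f' h' - g'^2 and its derivative
  have hP' : ∀ z, HasDerivAt (fun z => deriv f z * deriv h z - (deriv g z) ^ 2)
      (deriv (deriv f) z * deriv h z + deriv f z * deriv (deriv h) z
        - 2 * deriv g z * deriv (deriv g) z) z := by
    intro z
    have H := ((hf' z).hasDerivAt.mul (hh' z).hasDerivAt).sub ((hg' z).hasDerivAt.pow 2)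
    convert H using 1
    all_goals first | (ext x; simp only [Pi.mul_apply, Pi.sub_apply, Pi.add_apply, Pi.pow_apply, id_eq] <;> ring) | ring | rfl
  -- Step 1: P is constant
  have hPd0 : ∀ z, deriv (fun z => deriv f z * deriv h z - (deriv g z) ^ 2) z = 0 := by
    intro z
    rw [(hP' z).deriv]
    have key : 2 * (f z * h z - g z ^ 2) *
        (deriv (deriv f) z * deriv h z + deriv f z * deriv (deriv h) z
          - 2 * deriv g z * deriv (deriv g) z) = 0 := by
      linear_combination deriv h z * e1 z - deriv f z * e2 z + 2 * deriv g z * e3 z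
    rcases mul_eq_zero.mp key with hl | hr
    · exact absurd (by linarith : f z * h z - g z ^ 2 = 0) (hDne z)
    · exact hr
  have hPconst : ∀ z, deriv f z * deriv h z - (deriv g z) ^ 2
      = deriv f 0 * deriv h 0 - (deriv g 0) ^ 2 := by
    intro z
    exact is_const_of_deriv_eq_zero
      ((hf'.mul hh').sub (hg'.pow 2)) hPd0 z 0
  -- Step 3 identity: 2 D D'' = (D')^2
  have hDD : ∀ z, 2 * (f z * h z - g z ^ 2) *
      (deriv (deriv f) z * h z + 2 * deriv f z * deriv h z + f z * deriv (deriv h) z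
        - 2 * (deriv g z) ^ 2 - 2 * g z * deriv (deriv g) z)
      = (deriv f z * h z + f z * deriv h z - 2 * g z * deriv g z) ^ 2 := by
    intro z
    linear_combination h z * e1 z - f z * e2 z + 2 * g z * e3 z
  -- Step 4: k := (D')^2 / D is constant
  have hk' : ∀ z, HasDerivAt (fun z =>
      (deriv f z * h z + f z * deriv h z - 2 * g z * deriv g z) ^ 2
        / (f z * h z - g z ^ 2)) 0 z := by
    intro z
    have H := (((hDP' z).pow 2).div (hD' z) (hDne z))
    convert H using 1
    all_goals try first | (ext x; simp only [Pi.mul_apply, Pi.sub_apply, Pi.add_apply, Pi.pow_apply, id_eq] <;> ring) | rfl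
    rw [eq_comm, div_eq_zero_iff]
    left
    simp only [Pi.pow_apply]
    linear_combination (deriv f z * h z + f z * deriv h z - 2 * g z * deriv g z) * hDD z
  have hkconst : ∀ z,
      (deriv f z * h z + f z * deriv h z - 2 * g z * deriv g z) ^ 2 / (f z * h z - g z ^ 2)
      = (deriv f 0 * h 0 + f 0 * deriv h 0 - 2 * g 0 * deriv g 0) ^ 2
        / (f 0 * h 0 - g 0 ^ 2) := by
    intro z
    exact is_const_of_deriv_eq_zero (fun z => (hk' z).differentiableAt)
      (fun z => (hk' z).deriv) z 0
  set K : ℝ := (deriv f 0 * h 0 + f 0 * deriv h 0 - 2 * g 0 * deriv g 0) ^ 2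
      / (f 0 * h 0 - g 0 ^ 2) with hKdef
  have hKD : ∀ z, (deriv f z * h z + f z * deriv h z - 2 * g z * deriv g z) ^ 2
      = K * (f z * h z - g z ^ 2) := by
    intro z
    have h0 := hkconst z
    rw [div_eq_iff (hDne z)] at h0
    linarith [h0]
  -- D'' = K/2
  have hD2 : ∀ z, deriv (deriv f) z * h z + 2 * deriv f z * deriv h z + f z * deriv (deriv h) z
      - 2 * (deriv g z) ^ 2 - 2 * g z * deriv (deriv g) z = K / 2 := by
    intro z
    have h1 := hDD z
    rw [hKD z] at h1
    have h2 : (f z * h z - g z ^ 2) *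
        (2 * (deriv (deriv f) z * h z + 2 * deriv f z * deriv h z + f z * deriv (deriv h) z
          - 2 * (deriv g z) ^ 2 - 2 * g z * deriv (deriv g) z) - K) = 0 := by
      linear_combination h1
    rcases mul_eq_zero.mp h2 with hl | hr
    · exact absurd hl (hDne z)
    · linarith
  -- D' is affine: D' z = D' 0 + K/2 * z
  have hDPaffine : ∀ z, deriv f z * h z + f z * deriv h z - 2 * g z * deriv g z
      = (deriv f 0 * h 0 + f 0 * deriv h 0 - 2 * g 0 * deriv g 0) + K / 2 * z := by
    intro z
    have haux : ∀ w, HasDerivAt (fun z =>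
        (deriv f z * h z + f z * deriv h z - 2 * g z * deriv g z) - K / 2 * z) 0 w := by
      intro w
      have H := (hDP' w).sub ((hasDerivAt_id w).const_mul (K / 2))
      convert H using 1
      all_goals try first | (ext x; simp only [Pi.mul_apply, Pi.sub_apply, Pi.add_apply, Pi.pow_apply, id_eq] <;> ring) | rfl
      rw [hD2 w]
      ring
    have hc := is_const_of_deriv_eq_zero (fun w => (haux w).differentiableAt)
      (fun w => (haux w).deriv) z 0
    simp only [mul_zero, sub_zero] at hc
    linarith [hc]
  -- D is quadratic
  have hDquad : ∀ z, f z * h z - g z ^ 2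
      = (f 0 * h 0 - g 0 ^ 2)
        + (deriv f 0 * h 0 + f 0 * deriv h 0 - 2 * g 0 * deriv g 0) * z + K / 4 * z ^ 2 := by
    intro z
    have haux : ∀ w, HasDerivAt (fun z => (f z * h z - g z ^ 2)
        - (deriv f 0 * h 0 + f 0 * deriv h 0 - 2 * g 0 * deriv g 0) * z - K / 4 * z ^ 2) 0 w := by
      intro w
      have H := ((hD' w).sub ((hasDerivAt_id w).const_mul
          (deriv f 0 * h 0 + f 0 * deriv h 0 - 2 * g 0 * deriv g 0))).sub
          (((hasDerivAt_id w).pow 2).const_mul (K / 4))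
      convert H using 1
      all_goals try first | (ext x; simp only [Pi.mul_apply, Pi.sub_apply, Pi.add_apply, Pi.pow_apply, id_eq] <;> ring) | rfl
      rw [hDPaffine w]
      simp only [id_eq]
      ring
    have hc := is_const_of_deriv_eq_zero (fun w => (haux w).differentiableAt)
      (fun w => (haux w).deriv) z 0
    simp only [mul_zero, sub_zero] at hc
    norm_num at hc
    linarith [hc]
  -- K = 0
  have hK0 : K = 0 := by
    by_contra hK
    set D0 : ℝ := f 0 * h 0 - g 0 ^ 2 with hD0def
    set DP0 : ℝ := deriv f 0 * h 0 + f 0 * deriv h 0 - 2 * g 0 * deriv g 0 with hDP0def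
    have h00 : DP0 ^ 2 = K * D0 := hKD 0
    have hz : f (-(2 * DP0) / K) * h (-(2 * DP0) / K) - g (-(2 * DP0) / K) ^ 2 = 0 := by
      rw [hDquad (-(2 * DP0) / K)]
      have hexp : D0 + DP0 * (-(2 * DP0) / K) + K / 4 * (-(2 * DP0) / K) ^ 2
          = (K * D0 - DP0 ^ 2) / K := by
        field_simp
        ring
      rw [hexp, h00]
      simp
    exact hDne _ hz
  -- D' ≡ 0 and D constant
  have hDP0 : ∀ z, deriv f z * h z + f z * deriv h z - 2 * g z * deriv g z = 0 := by
    intro z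
    have := hKD z
    rw [hK0, zero_mul] at this
    exact pow_eq_zero_iff (two_ne_zero) |>.mp this
  have hDconst : ∀ z, f z * h z - g z ^ 2 = f 0 * h 0 - g 0 ^ 2 := by
    intro z
    have := hDquad z
    rw [hK0] at this
    have h0 := hDP0 0
    rw [h0] at this
    norm_num at this
    linarith [this]
  -- Step 2: D * P = f^2 h'^2
  have hW : ∀ z, (f z * h z - g z ^ 2) * (deriv f z * deriv h z - (deriv g z) ^ 2)
      = f z ^ 2 * (deriv h z) ^ 2 := by
    intro z
    linear_combination (-1 / 2 : ℝ) * e4 z + (h z / 2) * e1 z - (f z / 2) * e2 z + g z * e3 z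
  -- Main argument
  intro Z
  by_contra hne
  set p : ℝ := deriv f 0 * deriv h 0 - (deriv g 0) ^ 2 with hpdef
  set D0 : ℝ := f 0 * h 0 - g 0 ^ 2 with hD0def
  have hpz : deriv f Z * deriv h Z - (deriv g Z) ^ 2 = p := hPconst Z
  have hpne : p ≠ 0 := by
    intro hp0
    rw [hp0] at hpz
    apply hne
    linarith [hpz]
  have hposDP : 0 < D0 * p := by
    have h1 := hW Z
    rw [hpz, hDconst Z] at h1
    have h2 : 0 ≤ D0 * p := h1 ▸ by positivity
    rcases h2.lt_or_eq with hlt | heq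
    · exact hlt
    · exact absurd (mul_eq_zero.mp heq.symm)
        (by push_neg; exact ⟨hDne 0, hpne⟩)
  have hfne : ∀ z, f z ≠ 0 := by
    intro z hz0
    have h1 := hW z
    rw [hPconst z, hDconst z, hz0] at h1
    nlinarith [hposDP, h1]
  have hD0ne : D0 ≠ 0 := hDne 0
  set q : ℝ := p / D0 with hqdef
  have hq : 0 < q := by
    have hrw : q = D0 * p / D0 ^ 2 := by
      rw [hqdef]
      field_simp
    rw [hrw]
    exact div_pos hposDP (pow_two_pos_of_ne_zero hD0ne)
  -- oscillator equation f'' = -q f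
  have hosc : ∀ z, deriv (deriv f) z = -q * f z := by
    intro z
    have h1 : 2 * (f z * h z - g z ^ 2) * deriv (deriv f) z
        = -2 * (deriv f z * deriv h z - (deriv g z) ^ 2) * f z
          + deriv f z * (deriv f z * h z + f z * deriv h z - 2 * g z * deriv g z) := by
      linear_combination e1 z
    rw [hDP0 z, hPconst z, hDconst z] at h1
    have hDq : D0 * q = p := by
      rw [hqdef]
      field_simp
    have h2D0 : (2 : ℝ) * D0 ≠ 0 := by
      simp [hD0ne]
    apply mul_left_cancel₀ h2D0
    linear_combination h1 + 2 * f z * hDq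
  -- Wronskian with sin/cos
  set c : ℝ := Real.sqrt q with hcdef
  have hc : 0 < c := Real.sqrt_pos.mpr hq
  have hc2 : c ^ 2 = q := Real.sq_sqrt hq.le
  have hWr : ∀ z, HasDerivAt
      (fun z => f z * (c * Real.cos (c * z)) - deriv f z * Real.sin (c * z)) 0 z := by
    intro z
    have hlin : HasDerivAt (fun z : ℝ => c * z) c z := by
      simpa using (hasDerivAt_id z).const_mul c
    have hcos : HasDerivAt (fun z => Real.cos (c * z)) (-Real.sin (c * z) * c) z := hlin.cos
    have hsin : HasDerivAt (fun z => Real.sin (c * z)) (Real.cos (c * z) * c) z := hlin.sin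
    have H := ((hf z).hasDerivAt.mul (hcos.const_mul c)).sub
      ((hf' z).hasDerivAt.mul hsin)
    convert H using 1
    all_goals try first | (ext x; simp only [Pi.mul_apply, Pi.sub_apply, Pi.add_apply, Pi.pow_apply, id_eq] <;> ring) | rfl
    rw [hosc z]
    linear_combination (f z * Real.sin (c * z)) * hc2
  have hWc := is_const_of_deriv_eq_zero (fun w => (hWr w).differentiableAt)
    (fun w => (hWr w).deriv) (Real.pi / c) 0
  have hcne : c ≠ 0 := ne_of_gt hc
  have hπc : c * (Real.pi / c) = Real.pi := by
    rw [mul_div_assoc', mul_div_cancel_left₀ _ hcne]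
  rw [hπc] at hWc
  simp only [mul_zero, Real.cos_zero, Real.sin_zero, Real.cos_pi, Real.sin_pi] at hWc
  have hflip : f (Real.pi / c) = -f 0 := by
    apply mul_left_cancel₀ hcne
    linear_combination -hWc
  have hπpos : (0 : ℝ) ≤ Real.pi / c := by positivity
  rcases (hfne 0).lt_or_gt with hneg | hpos
  · -- f 0 < 0, f (π/c) = -f 0 > 0
    have h0mem : (0 : ℝ) ∈ Set.Icc (f 0) (f (Real.pi / c)) :=
      ⟨le_of_lt hneg, by rw [hflip]; linarith⟩
    obtain ⟨z, _, hz⟩ := intermediate_value_Icc hπpos (hf.continuous.continuousOn) h0mem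
    exact hfne z hz
  · -- f 0 > 0, f (π/c) = -f 0 < 0
    have h0mem : (0 : ℝ) ∈ Set.Icc (f (Real.pi / c)) (f 0) :=
      ⟨by rw [hflip]; linarith, le_of_lt hpos⟩
    obtain ⟨z, _, hz⟩ := intermediate_value_Icc' hπpos (hf.continuous.continuousOn) h0mem
    exact hfne z hz
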